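/- Let ε, l, m > 0. Define W(β) := √((m² sin²β + l² cos²β)/(l² sin²β + m² cos²β)) (which equals √((m² tan²β + l²)/(l² tan²β + m²)) wherever tan β is defined), and define M_v(t) := −ε l ∫_0^{2π} sin α · sin(l(cos α − 1)) · tanh( t − 5 + (m l/2) ∫_π^α W(β) dβ ) · W(α) dα. Then M_v is symmetric about t = 5: M_v(5 + s) = M_v(5 − s) for all s ∈ ℝ. -/

import Mathlib

open Real

noncomputable section

/-- The elliptic weight `W(β) = √((m² sin²β + l² cos²β)/(l² sin²β + m² cos²β))`. -/
noncomputable def Wgt (l m β : ℝ) : ℝ :=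
  Real.sqrt ((m ^ 2 * Real.sin β ^ 2 + l ^ 2 * Real.cos β ^ 2) /
    (l ^ 2 * Real.sin β ^ 2 + m ^ 2 * Real.cos β ^ 2))

/-- The leading-order instantaneous flux across the pseudo-streakline of Kirchhoff's
elliptic vortex (semi-axes `l`, `m`) with gate at polar angle `θ = π`, under the
agitation `v(x,y,t) = ε sin(x − l) tanh(t − 5) ĵ`. -/
noncomputable def Mvortex (ε l m t : ℝ) : ℝ :=
  -(ε * l) * ∫ α in (0:ℝ)..(2 * π),
    Real.sin α * Real.sin (l * (Real.cos α - 1)) *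
      Real.tanh (t - 5 + (m * l / 2) * ∫ β in π..α, Wgt l m β) * Wgt l m α

/-! The substitution `α ↦ 2π - α` fixes `W` and the phase integral up to sign, and flips the sign of
`sin α`; since `tanh` is odd, it exchanges the flux integrands at times `5 + s` and `5 - s`. -/

theorem intervalIntegral.integral_zero_eq_of_comp_sub_left {f g : ℝ → ℝ} {T : ℝ}
    (h : ∀ x, f (T - x) = g x) : ∫ x in (0:ℝ)..T, f x = ∫ x in (0:ℝ)..T, g x := by
  simp_rw [← h, intervalIntegral.integral_comp_sub_left, sub_self, sub_zero]

theorem intervalIntegral.integral_comp_two_mul_sub_of_symm {f : ℝ → ℝ} {c : ℝ}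
    (hf : ∀ x, f (2 * c - x) = f x) (a : ℝ) :
    ∫ x in c..(2 * c - a), f x = -∫ x in c..a, f x := by
  have h := intervalIntegral.integral_comp_sub_left (a := a) (b := c) f (2 * c)
  rw [two_mul c, add_sub_cancel_right, ← two_mul] at h
  simp only [hf] at h
  rw [← h, intervalIntegral.integral_symm]

theorem Wgt_two_pi_sub (l m α : ℝ) : Wgt l m (2 * π - α) = Wgt l m α := by
  simp only [Wgt, sin_two_pi_sub, cos_two_pi_sub, neg_sq]

theorem integral_Wgt_two_pi_sub (l m α : ℝ) :
    ∫ β in π..(2 * π - α), Wgt l m β = -∫ β in π..α, Wgt l m β :=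
  intervalIntegral.integral_comp_two_mul_sub_of_symm (Wgt_two_pi_sub l m) α

def fluxIntegrand (l m τ α : ℝ) : ℝ :=
  sin α * sin (l * (cos α - 1)) * tanh (τ + (m * l / 2) * ∫ β in π..α, Wgt l m β) * Wgt l m α

theorem Mvortex_eq_integral_fluxIntegrand (ε l m t : ℝ) :
    Mvortex ε l m t = -(ε * l) * ∫ α in (0:ℝ)..(2 * π), fluxIntegrand l m (t - 5) α :=
  rfl

theorem fluxIntegrand_two_pi_sub (l m τ α : ℝ) :
    fluxIntegrand l m τ (2 * π - α) = fluxIntegrand l m (-τ) α := by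
  have htanh : tanh (τ + (m * l / 2) * -∫ β in π..α, Wgt l m β)
      = -tanh (-τ + (m * l / 2) * ∫ β in π..α, Wgt l m β) := by
    rw [← tanh_neg]; ring_nf
  simp only [fluxIntegrand, integral_Wgt_two_pi_sub, Wgt_two_pi_sub, sin_two_pi_sub,
    cos_two_pi_sub, htanh]
  ring

theorem elliptic_vortex_flux_symmetric_general (ε l m : ℝ) :
    ∀ s : ℝ, Mvortex ε l m (5 + s) = Mvortex ε l m (5 - s) := by
  intro s
  simp only [Mvortex_eq_integral_fluxIntegrand, add_sub_cancel_left, sub_sub_cancel_left]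
  congr 1
  exact intervalIntegral.integral_zero_eq_of_comp_sub_left (fluxIntegrand_two_pi_sub l m s)

/-- **The elliptic-vortex flux is symmetric about `t = 5`:**
`M_v(5 + s) = M_v(5 − s)` for all `s`. -/
theorem elliptic_vortex_flux_symmetric (ε l m : ℝ) (hε : 0 < ε) (hl : 0 < l) (hm : 0 < m) :
    ∀ s : ℝ, Mvortex ε l m (5 + s) = Mvortex ε l m (5 - s) :=
  elliptic_vortex_flux_symmetric_general ε l m
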